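/- arXiv:1812.07186 — 2 statements merged into one kernel-verified Lean document; each statement's English description precedes it below -/
import Mathlib

section
/- Let P ∈ ℝ^{n₀×n₀} be symmetric, Q : [a,b] → ℝ^{n₀×n_p}, S : [a,b] → ℝ^{n_p×n_p} with S(s) symmetric, and R₁, R₂ : [a,b]×[a,b] → ℝ^{n_p×n_p} with R₂(s,η) = R₁(η,s)ᵀ, all bounded measurable, and set 𝒫 = 𝒫_{P,Q,Qᵀ,S,R₁,R₂}. Let 𝒫_dyn be as in the total fundamental representation of the coupled PDE-ODE system, and let 𝒦 = 𝒫_{I,0,0,0,G₁,G₂}* ∘ 𝒫 ∘ 𝒫_dyn, where * denotes the adjoint with respect to ⟨·,·⟩_X. Then for every x ∈ ℝ^{n₀} and every z ∈ W^{2,2}([a,b];ℝ^{n_p}) with B_c z_b = 0, ⟨(x,z), 𝒫·𝒫_dyn(x,z_ss)⟩_X + ⟨𝒫_dyn(x,z_ss), 𝒫(x,z)⟩_X = 2⟨(x,z_ss), 𝒦(x,z_ss)⟩_X. -/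
open MeasureTheory Matrix Set

noncomputable section

/-- The operator `𝒫_{P,Q₁,Q₂,S,R₁,R₂}` on `ℝ^m × L²([a,b];ℝⁿ)`, applied to a pair
`u = (x, z)`.  All integrals are taken entrywise. -/
def Pop (a b : ℝ) {m n : ℕ}
    (P : Matrix (Fin m) (Fin m) ℝ)
    (Q1 : ℝ → Matrix (Fin m) (Fin n) ℝ)
    (Q2 : ℝ → Matrix (Fin n) (Fin m) ℝ)
    (S : ℝ → Matrix (Fin n) (Fin n) ℝ)
    (R1 R2 : ℝ → ℝ → Matrix (Fin n) (Fin n) ℝ)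
    (u : (Fin m → ℝ) × (ℝ → Fin n → ℝ)) :
    (Fin m → ℝ) × (ℝ → Fin n → ℝ) :=
  (P.mulVec u.1 + (fun i => ∫ s in a..b, (Q1 s).mulVec (u.2 s) i),
   fun s => (Q2 s).mulVec u.1 + (S s).mulVec (u.2 s)
     + (fun i => ∫ η in a..s, (R1 s η).mulVec (u.2 η) i)
     + (fun i => ∫ η in s..b, (R2 s η).mulVec (u.2 η) i))

/-- The inner product on `X = ℝ^m × L²([a,b];ℝⁿ)`:
`⟨(x₁,x₂),(z₁,z₂)⟩_X = x₁ᵀz₁ + ∫ₐᵇ x₂(s)ᵀ z₂(s) ds`. -/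
def innerX (a b : ℝ) {m n : ℕ}
    (u v : (Fin m → ℝ) × (ℝ → Fin n → ℝ)) : ℝ :=
  u.1 ⬝ᵥ v.1 + ∫ s in a..b, u.2 s ⬝ᵥ v.2 s

/-- `z ∈ L²([a,b];ℝⁿ)`. -/
def MemL2 (a b : ℝ) {n : ℕ} (z : ℝ → Fin n → ℝ) : Prop :=
  MemLp z 2 (volume.restrict (Icc a b))

/-- A bounded measurable matrix-valued function on `[a,b]`. -/
def BddMeas (a b : ℝ) {k l : ℕ} (F : ℝ → Matrix (Fin k) (Fin l) ℝ) : Prop :=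
  (∀ i j, Measurable fun s => F s i j) ∧
    ∃ C, ∀ s ∈ Icc a b, ∀ i j, |F s i j| ≤ C

/-- A bounded measurable matrix-valued kernel on `[a,b] × [a,b]`. -/
def BddMeas2 (a b : ℝ) {k l : ℕ} (F : ℝ → ℝ → Matrix (Fin k) (Fin l) ℝ) : Prop :=
  (∀ i j, Measurable fun p : ℝ × ℝ => F p.1 p.2 i j) ∧
    ∃ C, ∀ s ∈ Icc a b, ∀ η ∈ Icc a b, ∀ i j, |F s η i j| ≤ C

/-- Entrywise integral of a matrix-valued function. -/
def mInt {k l : ℕ} (c d : ℝ) (F : ℝ → Matrix (Fin k) (Fin l) ℝ) :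
    Matrix (Fin k) (Fin l) ℝ :=
  Matrix.of fun i j => ∫ t in c..d, F t i j

/-- The block matrix `B_d ∈ ℝ^{4n_p × 2n_p}` with block rows
`[I, 0]`, `[I, (b−a)I]`, `[0, I]`, `[0, I]`. -/
def Bdm (a b : ℝ) (np : ℕ) : Matrix (Fin 4 × Fin np) (Fin 2 × Fin np) ℝ :=
  Matrix.of fun p q =>
    (![![(1 : Matrix (Fin np) (Fin np) ℝ), 0],
       ![1, (b - a) • 1],
       ![0, 1],
       ![0, 1]] p.1 q.1) p.2 q.2

/-- The block column `col(0, (b−η)I, 0, I) ∈ ℝ^{4n_p × n_p}`. -/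
def colE (b : ℝ) (np : ℕ) (η : ℝ) : Matrix (Fin 4 × Fin np) (Fin np) ℝ :=
  Matrix.of fun p j =>
    (![(0 : Matrix (Fin np) (Fin np) ℝ), (b - η) • 1, 0, 1] p.1) p.2 j

/-- `B_f(η) = (B_c B_d)⁻¹ B_c col(0,(b−η)I,0,I)`. -/
def Bfm (a b : ℝ) {np : ℕ}
    (Bc : Matrix (Fin 2 × Fin np) (Fin 4 × Fin np) ℝ) (η : ℝ) :
    Matrix (Fin 2 × Fin np) (Fin np) ℝ :=
  (Bc * Bdm a b np)⁻¹ * Bc * colE b np η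

/-- The block row `[I, (s−a)I] ∈ ℝ^{n_p × 2n_p}`. -/
def rowIA (a : ℝ) (np : ℕ) (s : ℝ) : Matrix (Fin np) (Fin 2 × Fin np) ℝ :=
  Matrix.of fun i q => (![(1 : Matrix (Fin np) (Fin np) ℝ), (s - a) • 1] q.1) i q.2

/-- The block row `[0, I] ∈ ℝ^{n_p × 2n_p}`. -/
def rowZI (np : ℕ) : Matrix (Fin np) (Fin 2 × Fin np) ℝ :=
  Matrix.of fun i q => (![(0 : Matrix (Fin np) (Fin np) ℝ), 1] q.1) i q.2

/-- `B_a(s,η) = −[I,(s−a)I] B_f(η)`. -/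
def Bam (a b : ℝ) {np : ℕ}
    (Bc : Matrix (Fin 2 × Fin np) (Fin 4 × Fin np) ℝ) (s η : ℝ) :
    Matrix (Fin np) (Fin np) ℝ :=
  -(rowIA a np s * Bfm a b Bc η)

/-- `B_b(η) = −[0,I] B_f(η)`. -/
def Bbm (a b : ℝ) {np : ℕ}
    (Bc : Matrix (Fin 2 × Fin np) (Fin 4 × Fin np) ℝ) (η : ℝ) :
    Matrix (Fin np) (Fin np) ℝ :=
  -(rowZI np * Bfm a b Bc η)

/-- `G₁(s,η) = B_a(s,η) + (s−η)I`. -/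
def G1m (a b : ℝ) {np : ℕ}
    (Bc : Matrix (Fin 2 × Fin np) (Fin 4 × Fin np) ℝ) (s η : ℝ) :
    Matrix (Fin np) (Fin np) ℝ :=
  Bam a b Bc s η + (s - η) • 1

/-- `G₂(s,η) = B_a(s,η)`. -/
def G2m (a b : ℝ) {np : ℕ}
    (Bc : Matrix (Fin 2 × Fin np) (Fin 4 × Fin np) ℝ) (s η : ℝ) :
    Matrix (Fin np) (Fin np) ℝ :=
  Bam a b Bc s η

/-- `G₃(s,η) = B_b(η) + I`. -/
def G3m (a b : ℝ) {np : ℕ}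
    (Bc : Matrix (Fin 2 × Fin np) (Fin 4 × Fin np) ℝ) (_s η : ℝ) :
    Matrix (Fin np) (Fin np) ℝ :=
  Bbm a b Bc η + 1

/-- `G₄(s,η) = B_b(η)`. -/
def G4m (a b : ℝ) {np : ℕ}
    (Bc : Matrix (Fin 2 × Fin np) (Fin 4 × Fin np) ℝ) (_s η : ℝ) :
    Matrix (Fin np) (Fin np) ℝ :=
  Bbm a b Bc η

/-- The boundary vector `z_b = col(z(a), z(b), z_s(a), z_s(b)) ∈ ℝ^{4n_p}`. -/
def zbv (a b : ℝ) {np : ℕ} (z zs : ℝ → Fin np → ℝ) : Fin 4 × Fin np → ℝ :=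
  fun p => ![z a, z b, zs a, zs b] p.1 p.2
/-- The PDE output map `𝒞z = C₁z_b + ∫ₐᵇ (C_a(s)z(s) + C_b(s)z_s(s)) ds`. -/
def Cop (a b : ℝ) {np pp : ℕ} (C1 : Matrix (Fin pp) (Fin 4 × Fin np) ℝ)
    (Ca Cb : ℝ → Matrix (Fin pp) (Fin np) ℝ) (z zs : ℝ → Fin np → ℝ) : Fin pp → ℝ :=
  fun i => C1.mulVec (zbv a b z zs) i
    + ∫ s in a..b, ((Ca s).mulVec (z s) i + (Cb s).mulVec (zs s) i)

/-- `C₃(s) = −C₁ B_d B_f(s) + C₁ col(0,(b−s)I,0,I)`. -/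
def C3m (a b : ℝ) {np pp : ℕ}
    (Bc : Matrix (Fin 2 × Fin np) (Fin 4 × Fin np) ℝ)
    (C1 : Matrix (Fin pp) (Fin 4 × Fin np) ℝ) (s : ℝ) :
    Matrix (Fin pp) (Fin np) ℝ :=
  -(C1 * Bdm a b np * Bfm a b Bc s) + C1 * colE b np s

/-- The closed-loop generator `Ā` of the coupled PDE-ODE system, applied to `(x,z)`. -/
def Abar (a b : ℝ) {n0 np m0 p0 mp pp : ℕ}
    (A : Matrix (Fin n0) (Fin n0) ℝ) (B : Matrix (Fin n0) (Fin m0) ℝ)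
    (C : Matrix (Fin p0) (Fin n0) ℝ)
    (L1 : Matrix (Fin m0) (Fin p0) ℝ) (L2 : Matrix (Fin m0) (Fin pp) ℝ)
    (L3 : Matrix (Fin mp) (Fin p0) ℝ) (L4 : Matrix (Fin mp) (Fin pp) ℝ)
    (A0 A1 A2 : ℝ → Matrix (Fin np) (Fin np) ℝ)
    (B1 : ℝ → Matrix (Fin np) (Fin mp) ℝ)
    (Ca Cb : ℝ → Matrix (Fin pp) (Fin np) ℝ)
    (C1 : Matrix (Fin pp) (Fin 4 × Fin np) ℝ)
    (x : Fin n0 → ℝ) (z zs zss : ℝ → Fin np → ℝ) :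
    (Fin n0 → ℝ) × (ℝ → Fin np → ℝ) :=
  ((A + B * L1 * C).mulVec x + (B * L2).mulVec (Cop a b C1 Ca Cb z zs),
   fun s => (B1 s * L3 * C).mulVec x + (A0 s).mulVec (z s) + (A1 s).mulVec (zs s)
     + (A2 s).mulVec (zss s) + (B1 s * L4).mulVec (Cop a b C1 Ca Cb z zs))

/-- The total fundamental representation operator
`𝒫_dyn = 𝒫_{A+BL₁C, BL₂C_a, B₁L₃C, A₀+B₁L₄C_a, 0, 0} ∘ 𝒫_{I,0,0,0,G₁,G₂}`
`+ 𝒫_{0, BL₂C_b, 0, A₁+B₁L₄C_b, 0, 0} ∘ 𝒫_{I,0,0,0,G₃,G₄}`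
`+ 𝒫_{0, BL₂C₃, 0, A₂+B₁L₄C₃, 0, 0}`, applied to `u`. -/
def PdynApply (a b : ℝ) {n0 np m0 p0 mp pp : ℕ}
    (A : Matrix (Fin n0) (Fin n0) ℝ) (B : Matrix (Fin n0) (Fin m0) ℝ)
    (C : Matrix (Fin p0) (Fin n0) ℝ)
    (L1 : Matrix (Fin m0) (Fin p0) ℝ) (L2 : Matrix (Fin m0) (Fin pp) ℝ)
    (L3 : Matrix (Fin mp) (Fin p0) ℝ) (L4 : Matrix (Fin mp) (Fin pp) ℝ)
    (A0 A1 A2 : ℝ → Matrix (Fin np) (Fin np) ℝ)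
    (B1 : ℝ → Matrix (Fin np) (Fin mp) ℝ)
    (Ca Cb : ℝ → Matrix (Fin pp) (Fin np) ℝ)
    (C1 : Matrix (Fin pp) (Fin 4 × Fin np) ℝ)
    (Bc : Matrix (Fin 2 × Fin np) (Fin 4 × Fin np) ℝ)
    (u : (Fin n0 → ℝ) × (ℝ → Fin np → ℝ)) :
    (Fin n0 → ℝ) × (ℝ → Fin np → ℝ) :=
  Pop a b (A + B * L1 * C) (fun s => B * L2 * Ca s) (fun s => B1 s * L3 * C)
      (fun s => A0 s + B1 s * L4 * Ca s) (fun _ _ => 0) (fun _ _ => 0)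
      (Pop a b 1 (fun _ => 0) (fun _ => 0) (fun _ => 0) (G1m a b Bc) (G2m a b Bc) u)
  + Pop a b 0 (fun s => B * L2 * Cb s) (fun _ => 0)
      (fun s => A1 s + B1 s * L4 * Cb s) (fun _ _ => 0) (fun _ _ => 0)
      (Pop a b 1 (fun _ => 0) (fun _ => 0) (fun _ => 0) (G3m a b Bc) (G4m a b Bc) u)
  + Pop a b 0 (fun s => B * L2 * C3m a b Bc C1 s) (fun _ => 0)
      (fun s => A2 s + B1 s * L4 * C3m a b Bc C1 s) (fun _ _ => 0) (fun _ _ => 0) u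

/-- The adjoint `𝒫_{I,0,0,0,G₁,G₂}*`, i.e. `𝒫_{I,0,0,0,G₂(η,s)ᵀ,G₁(η,s)ᵀ}`, applied to `u`. -/
def PGadjApply (a b : ℝ) {n0 np : ℕ}
    (Bc : Matrix (Fin 2 × Fin np) (Fin 4 × Fin np) ℝ)
    (u : (Fin n0 → ℝ) × (ℝ → Fin np → ℝ)) :
    (Fin n0 → ℝ) × (ℝ → Fin np → ℝ) :=
  Pop a b 1 (fun _ => 0) (fun _ => 0) (fun _ => 0)
    (fun s η => (G2m a b Bc η s)ᵀ) (fun s η => (G1m a b Bc η s)ᵀ) u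

/-- The operator `𝒦 = 𝒫_{I,0,0,0,G₁,G₂}* ∘ 𝒫 ∘ 𝒫_dyn`, applied to `u`. -/
def Kapply (a b : ℝ) {n0 np m0 p0 mp pp : ℕ}
    (A : Matrix (Fin n0) (Fin n0) ℝ) (B : Matrix (Fin n0) (Fin m0) ℝ)
    (C : Matrix (Fin p0) (Fin n0) ℝ)
    (L1 : Matrix (Fin m0) (Fin p0) ℝ) (L2 : Matrix (Fin m0) (Fin pp) ℝ)
    (L3 : Matrix (Fin mp) (Fin p0) ℝ) (L4 : Matrix (Fin mp) (Fin pp) ℝ)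
    (A0 A1 A2 : ℝ → Matrix (Fin np) (Fin np) ℝ)
    (B1 : ℝ → Matrix (Fin np) (Fin mp) ℝ)
    (Ca Cb : ℝ → Matrix (Fin pp) (Fin np) ℝ)
    (C1 : Matrix (Fin pp) (Fin 4 × Fin np) ℝ)
    (Bc : Matrix (Fin 2 × Fin np) (Fin 4 × Fin np) ℝ)
    (P : Matrix (Fin n0) (Fin n0) ℝ) (Q : ℝ → Matrix (Fin n0) (Fin np) ℝ)
    (S : ℝ → Matrix (Fin np) (Fin np) ℝ) (R1 R2 : ℝ → ℝ → Matrix (Fin np) (Fin np) ℝ)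
    (u : (Fin n0 → ℝ) × (ℝ → Fin np → ℝ)) :
    (Fin n0 → ℝ) × (ℝ → Fin np → ℝ) :=
  PGadjApply a b Bc
    (Pop a b P Q (fun s => (Q s)ᵀ) S R1 R2
      (PdynApply a b A B C L1 L2 L3 L4 A0 A1 A2 B1 Ca Cb C1 Bc u))

/-!
Write `𝒫_G = 𝒫_{I,0,0,0,G₁,G₂}`. Taylor's formula with integral remainder gives
`z_b = B_d col(z(a), z_s(a)) + ∫ₐᵇ col(0,(b−η)I,0,I) z_ss(η) dη`, so the boundary condition
`B_c z_b = 0` determines `col(z(a), z_s(a)) = −∫ₐᵇ B_f(η) z_ss(η) dη`; substituting this into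
Taylor's formula at `s` shows `𝒫_G (x, z_ss) = (x, z)` on `[a,b]`. Hence
`⟨(x,z_ss), 𝒦(x,z_ss)⟩ = ⟨𝒫_G (x,z_ss), 𝒫 𝒫_dyn(x,z_ss)⟩ = ⟨(x,z), 𝒫 𝒫_dyn(x,z_ss)⟩`, and
self-adjointness of `𝒫` turns the other term of the left-hand side into the same quantity.
Both adjoint identities come from Fubini on the triangle `η ≤ s`:
`∫ₐᵇ f(s)ᵀ ∫ₐˢ K(s,η) g(η) dη ds = ∫ₐᵇ (∫_ηᵇ K(s,η)ᵀ f(s) ds)ᵀ g(η) dη`.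
Integrability is always L¹ against L^∞: `z` is bounded, while `z_ss` and everything obtained
from it by bounded coefficients and kernels is integrable.
-/

open scoped ENNReal

theorem Matrix.IsSymm.dotProduct_mulVec_comm {ι α : Type*} [Fintype ι] [CommSemiring α]
    {A : Matrix ι ι α} (hA : A.IsSymm) (x y : ι → α) : x ⬝ᵥ A *ᵥ y = y ⬝ᵥ A *ᵥ x := by
  rw [← dotProduct_transpose_mulVec, hA.eq]

section EssentiallyBounded

variable {α : Type*} [MeasurableSpace α] {μ : Measure α}

theorem ContinuousOn.memLp_top_restrict_of_subset_isCompact [TopologicalSpace α]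
    [OpensMeasurableSpace α] {E : Type*} [NormedAddCommGroup E] {f : α → E} {s t : Set α}
    (hf : ContinuousOn f s) (hs : IsCompact s) (ht : MeasurableSet t) (hts : t ⊆ s) :
    MemLp f ∞ (μ.restrict t) := by
  obtain ⟨C, hC⟩ := hs.exists_bound_of_continuousOn hf
  refine memLp_top_of_bound (hf.aestronglyMeasurable_of_subset_isCompact hs ht hts) C ?_
  filter_upwards [ae_restrict_mem ht] with x hx using hC x (hts hx)

variable {ι κ τ : Type*} [Fintype κ]

theorem memLp_top_mul_apply {M : α → Matrix ι κ ℝ} {N : α → Matrix κ τ ℝ}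
    (hM : ∀ i j, MemLp (fun x => M x i j) ∞ μ) (hN : ∀ i j, MemLp (fun x => N x i j) ∞ μ)
    (i : ι) (j : τ) : MemLp (fun x => (M x * N x) i j) ∞ μ := by
  simp only [Matrix.mul_apply]
  exact memLp_finsetSum _ fun l _ => (hN l j).mul' (hM i l)

theorem MemLp.mulVec [Fintype ι] {p : ENNReal} {M : α → Matrix ι κ ℝ}
    (hM : ∀ i j, MemLp (fun x => M x i j) ∞ μ) {g : α → κ → ℝ} (hg : MemLp g p μ) :
    MemLp (fun x => M x *ᵥ g x) p μ := by
  refine memLp_pi_iff.2 fun i => ?_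
  simp only [Matrix.mulVec, dotProduct]
  exact memLp_finsetSum _ fun j _ => (hg.eval j).mul' (hM i j)

theorem Integrable.mulVec [Fintype ι] {M : α → Matrix ι κ ℝ}
    (hM : ∀ i j, MemLp (fun x => M x i j) ∞ μ) {g : α → κ → ℝ} (hg : Integrable g μ) :
    Integrable (fun x => M x *ᵥ g x) μ :=
  memLp_one_iff_integrable.1 (MemLp.mulVec hM (memLp_one_iff_integrable.2 hg))

theorem Integrable.dotProduct_of_memLp_top [Fintype ι] {f g : α → ι → ℝ} (hf : Integrable f μ)
    (hg : MemLp g ∞ μ) : Integrable (fun x => f x ⬝ᵥ g x) μ := by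
  simp only [dotProduct]
  exact integrable_finsetSum _ fun i _ => (hf.eval i).mul_of_top_left (hg.eval i)

end EssentiallyBounded

section BoundedCoefficients

variable {a b : ℝ}

theorem BddMeas.memLp_top {k l : ℕ} {F : ℝ → Matrix (Fin k) (Fin l) ℝ}
    (hF : BddMeas a b F) (i : Fin k) (j : Fin l) :
    MemLp (fun s => F s i j) ∞ (volume.restrict (Ioc a b)) := by
  obtain ⟨hm, C, hC⟩ := hF
  refine memLp_top_of_bound (hm i j).aestronglyMeasurable C ?_
  filter_upwards [ae_restrict_mem measurableSet_Ioc] with s hs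
  exact hC s (Ioc_subset_Icc_self hs) i j

theorem BddMeas2.memLp_top {k l : ℕ} {F : ℝ → ℝ → Matrix (Fin k) (Fin l) ℝ}
    (hF : BddMeas2 a b F) (i : Fin k) (j : Fin l) :
    MemLp (fun p : ℝ × ℝ => F p.1 p.2 i j) ∞
      ((volume.restrict (Ioc a b)).prod (volume.restrict (Ioc a b))) := by
  obtain ⟨hm, C, hC⟩ := hF
  rw [Measure.prod_restrict, ← Measure.volume_eq_prod]
  refine memLp_top_of_bound (hm i j).aestronglyMeasurable C ?_
  filter_upwards [ae_restrict_mem (measurableSet_Ioc.prod measurableSet_Ioc)] with p hp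
  exact hC p.1 (Ioc_subset_Icc_self hp.1) p.2 (Ioc_subset_Icc_self hp.2) i j

theorem Continuous.memLp_top_apply {ι κ : Type*} {M : ℝ → Matrix ι κ ℝ}
    (hM : Continuous M) (i : ι) (j : κ) :
    MemLp (fun s => M s i j) ∞ (volume.restrict (Ioc a b)) :=
  (hM.matrix_elem i j).continuousOn.memLp_top_restrict_of_subset_isCompact isCompact_Icc
    measurableSet_Ioc Ioc_subset_Icc_self

theorem Continuous.memLp_top_apply_prod {ι κ : Type*} {K : ℝ → ℝ → Matrix ι κ ℝ}
    (hK : Continuous fun p : ℝ × ℝ => K p.1 p.2) (i : ι) (j : κ) :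
    MemLp (fun p : ℝ × ℝ => K p.1 p.2 i j) ∞
      ((volume.restrict (Ioc a b)).prod (volume.restrict (Ioc a b))) := by
  rw [Measure.prod_restrict, ← Measure.volume_eq_prod]
  exact (hK.matrix_elem i j).continuousOn.memLp_top_restrict_of_subset_isCompact
    (isCompact_Icc.prod isCompact_Icc) (measurableSet_Ioc.prod measurableSet_Ioc)
    (prod_mono Ioc_subset_Icc_self Ioc_subset_Icc_self)

end BoundedCoefficients

section IntervalIntegrals

variable {a b : ℝ}

theorem IntegrableOn.intervalIntegrable_of_le {E : Type*} [NormedAddCommGroup E] {h : ℝ → E}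
    (hh : IntegrableOn h (Ioc a b))
    {s t : ℝ} (has : a ≤ s) (hst : s ≤ t) (htb : t ≤ b) : IntervalIntegrable h volume s t :=
  (intervalIntegrable_iff_integrableOn_Ioc_of_le hst).2 (hh.mono_set (Ioc_subset_Ioc has htb))

theorem dotProduct_intervalIntegral {ι : Type*} [Fintype ι] (c : ι → ℝ) {v : ℝ → ι → ℝ} {s t : ℝ}
    (hv : ∀ i, IntervalIntegrable (fun η => v η i) volume s t) :
    (c ⬝ᵥ fun i => ∫ η in s..t, v η i) = ∫ η in s..t, c ⬝ᵥ v η := by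
  simp only [dotProduct]
  rw [intervalIntegral.integral_finsetSum fun i _ => (hv i).const_mul (c i)]
  simp only [intervalIntegral.integral_const_mul]

theorem mulVec_intervalIntegral {ι κ : Type*} [Fintype κ] (M : Matrix ι κ ℝ) {v : ℝ → κ → ℝ}
    {c d : ℝ} (hv : ∀ j, IntervalIntegrable (fun η => v η j) volume c d) :
    M *ᵥ (fun j => ∫ η in c..d, v η j) = fun i => ∫ η in c..d, (M *ᵥ v η) i :=
  funext fun i => dotProduct_intervalIntegral (fun j => M i j) hv

theorem integral_indicator_Iic_restrict_Ioc {E : Type*} [NormedAddCommGroup E] [NormedSpace ℝ E]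
    {s : ℝ} (hs : s ∈ Ioc a b) (h : ℝ → E) :
    ∫ η, (Iic s).indicator h η ∂(volume.restrict (Ioc a b)) = ∫ η in a..s, h η := by
  rw [integral_indicator measurableSet_Iic, Measure.restrict_restrict measurableSet_Iic,
    Iic_inter_Ioc_of_le hs.2, intervalIntegral.integral_of_le hs.1.le]

theorem integral_indicator_Ici_restrict_Ioc {E : Type*} [NormedAddCommGroup E] [NormedSpace ℝ E]
    {s : ℝ} (hs : s ∈ Ioc a b) (h : ℝ → E) :
    ∫ η, (Ici s).indicator h η ∂(volume.restrict (Ioc a b)) = ∫ η in s..b, h η := by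
  have hinter : Ici s ∩ Ioc a b = Icc s b := by
    ext η
    simp only [mem_inter_iff, mem_Ici, mem_Ioc, mem_Icc]
    exact ⟨fun h => ⟨h.1, h.2.2⟩, fun h => ⟨h.1, hs.1.trans_le h.1, h.2⟩⟩
  rw [integral_indicator measurableSet_Ici, Measure.restrict_restrict measurableSet_Ici, hinter,
    integral_Icc_eq_integral_Ioc, intervalIntegral.integral_of_le hs.2]

theorem integral_eq_sub_of_hasDerivWithinAt_Icc {E : Type*} [NormedAddCommGroup E]
    [NormedSpace ℝ E] [CompleteSpace E] {f f' : ℝ → E}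
    (hf : ∀ t ∈ Icc a b, HasDerivWithinAt f (f' t) (Icc a b) t)
    (hf' : IntegrableOn f' (Ioc a b)) {s : ℝ} (hs : s ∈ Icc a b) :
    ∫ t in a..s, f' t = f s - f a :=
  intervalIntegral.integral_eq_sub_of_hasDerivAt_of_le hs.1
    (fun t ht => ((hf t ⟨ht.1, ht.2.trans hs.2⟩).continuousWithinAt).mono
      (Icc_subset_Icc_right hs.2))
    (fun t ht => (hf t ⟨ht.1.le, ht.2.le.trans hs.2⟩).hasDerivAt
      (Icc_mem_nhds ht.1 (ht.2.trans_le hs.2)))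
    (IntegrableOn.intervalIntegrable_of_le hf' le_rfl hs.1 hs.2)

theorem IntegrableOn.const_sub_mul {f : ℝ → ℝ} (hf : IntegrableOn f (Ioc a b)) (s : ℝ) :
    IntegrableOn (fun t => (s - t) * f t) (Ioc a b) :=
  Integrable.mul_of_top_right hf <|
    (continuous_const.sub continuous_id).continuousOn.memLp_top_restrict_of_subset_isCompact
      isCompact_Icc measurableSet_Ioc Ioc_subset_Icc_self

theorem integral_sub_mul_eq_taylor_remainder {f f' f'' : ℝ → ℝ}
    (hf : ∀ t ∈ Icc a b, HasDerivWithinAt f (f' t) (Icc a b) t)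
    (hf' : ∀ t ∈ Icc a b, HasDerivWithinAt f' (f'' t) (Icc a b) t)
    (hf'' : IntegrableOn f'' (Ioc a b)) {s : ℝ} (hs : s ∈ Icc a b) :
    ∫ t in a..s, (s - t) * f'' t = f s - f a - (s - a) * f' a := by
  have hderiv : ∀ t ∈ Icc a b, HasDerivWithinAt (fun t => (s - t) * f' t + f t)
      ((s - t) * f'' t) (Icc a b) t := fun t ht => by
    refine ((((hasDerivWithinAt_id t _).const_sub s).mul (hf' t ht)).add (hf t ht)).congr_deriv ?_
    simp only [id]
    ring
  rw [integral_eq_sub_of_hasDerivWithinAt_Icc hderiv (IntegrableOn.const_sub_mul hf'' s) hs]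
  ring

end IntervalIntegrals

section Volterra

variable {a b : ℝ} {m n : ℕ}

def volterraLeft (a : ℝ) (K : ℝ → ℝ → Matrix (Fin m) (Fin n) ℝ) (g : ℝ → Fin n → ℝ)
    (s : ℝ) : Fin m → ℝ :=
  fun i => ∫ η in a..s, (K s η *ᵥ g η) i

def volterraRight (b : ℝ) (K : ℝ → ℝ → Matrix (Fin m) (Fin n) ℝ) (g : ℝ → Fin n → ℝ)
    (s : ℝ) : Fin m → ℝ :=
  fun i => ∫ η in s..b, (K s η *ᵥ g η) i

theorem memLp_top_transpose_swap {α β ι κ : Type*} [MeasurableSpace α] [MeasurableSpace β]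
    {μ : Measure α} {ν : Measure β} [SFinite μ] [SFinite ν] {K : α → β → Matrix ι κ ℝ}
    (hK : ∀ i j, MemLp (fun p : α × β => K p.1 p.2 i j) ∞ (μ.prod ν)) (i : κ) (j : ι) :
    MemLp (fun p : β × α => (K p.2 p.1)ᵀ i j) ∞ (ν.prod μ) :=
  (hK j i).comp_measurePreserving Measure.measurePreserving_swap

theorem Integrable.indicator_dotProduct_mulVec_prod {α β ι κ : Type*} [MeasurableSpace α]
    [MeasurableSpace β] [Fintype ι] [Fintype κ] {μ : Measure α} {ν : Measure β} [SFinite ν]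
    {K : α → β → Matrix ι κ ℝ} (hK : ∀ i j, MemLp (fun p : α × β => K p.1 p.2 i j) ∞ (μ.prod ν))
    {f : α → ι → ℝ} {g : β → κ → ℝ} (hf : Integrable f μ) (hg : Integrable g ν)
    {T : Set (α × β)} (hT : MeasurableSet T) :
    Integrable (T.indicator fun p => f p.1 ⬝ᵥ K p.1 p.2 *ᵥ g p.2) (μ.prod ν) := by
  refine Integrable.indicator ?_ hT
  have hsum : (fun p : α × β => f p.1 ⬝ᵥ K p.1 p.2 *ᵥ g p.2)
      = fun p => ∑ i, ∑ j, K p.1 p.2 i j * (f p.1 i * g p.2 j) := by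
    funext p
    simp only [dotProduct, Matrix.mulVec, Finset.mul_sum]
    exact Finset.sum_congr rfl fun i _ => Finset.sum_congr rfl fun j _ => by ring
  rw [hsum]
  exact integrable_finsetSum _ fun i _ => integrable_finsetSum _ fun j _ =>
    ((hf.eval i).mul_prod (hg.eval j)).mul_of_top_right (hK i j)

theorem integral_indicator_lowerTriangle_slice_left {K : ℝ → ℝ → Matrix (Fin m) (Fin n) ℝ}
    {f : ℝ → Fin m → ℝ} {g : ℝ → Fin n → ℝ} {s : ℝ} (hs : s ∈ Ioc a b)
    (hslice : IntegrableOn (fun η => K s η *ᵥ g η) (Ioc a b)) :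
    ∫ η, {p : ℝ × ℝ | p.2 ≤ p.1}.indicator (fun p => f p.1 ⬝ᵥ K p.1 p.2 *ᵥ g p.2) (s, η)
        ∂(volume.restrict (Ioc a b)) = f s ⬝ᵥ volterraLeft a K g s := by
  have hind : ∀ η, {p : ℝ × ℝ | p.2 ≤ p.1}.indicator (fun p => f p.1 ⬝ᵥ K p.1 p.2 *ᵥ g p.2)
      (s, η) = (Iic s).indicator (fun η => f s ⬝ᵥ K s η *ᵥ g η) η := fun η => by
    simp [indicator_apply]
  simp only [hind, integral_indicator_Iic_restrict_Ioc hs]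
  exact (dotProduct_intervalIntegral _ fun i =>
    IntegrableOn.intervalIntegrable_of_le (hslice.eval i) le_rfl hs.1.le hs.2).symm

theorem integral_indicator_upperTriangle_slice_left {K : ℝ → ℝ → Matrix (Fin m) (Fin n) ℝ}
    {f : ℝ → Fin m → ℝ} {g : ℝ → Fin n → ℝ} {s : ℝ} (hs : s ∈ Ioc a b)
    (hslice : IntegrableOn (fun η => K s η *ᵥ g η) (Ioc a b)) :
    ∫ η, {p : ℝ × ℝ | p.1 ≤ p.2}.indicator (fun p => f p.1 ⬝ᵥ K p.1 p.2 *ᵥ g p.2) (s, η)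
        ∂(volume.restrict (Ioc a b)) = f s ⬝ᵥ volterraRight b K g s := by
  have hind : ∀ η, {p : ℝ × ℝ | p.1 ≤ p.2}.indicator (fun p => f p.1 ⬝ᵥ K p.1 p.2 *ᵥ g p.2)
      (s, η) = (Ici s).indicator (fun η => f s ⬝ᵥ K s η *ᵥ g η) η := fun η => by
    simp [indicator_apply]
  simp only [hind, integral_indicator_Ici_restrict_Ioc hs]
  exact (dotProduct_intervalIntegral _ fun i =>
    IntegrableOn.intervalIntegrable_of_le (hslice.eval i) hs.1.le hs.2 le_rfl).symm

theorem integral_indicator_lowerTriangle_slice_right {K : ℝ → ℝ → Matrix (Fin m) (Fin n) ℝ}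
    {f : ℝ → Fin m → ℝ} {g : ℝ → Fin n → ℝ} {η : ℝ} (hη : η ∈ Ioc a b)
    (hslice : IntegrableOn (fun s => (K s η)ᵀ *ᵥ f s) (Ioc a b)) :
    ∫ s, {p : ℝ × ℝ | p.2 ≤ p.1}.indicator (fun p => f p.1 ⬝ᵥ K p.1 p.2 *ᵥ g p.2) (s, η)
        ∂(volume.restrict (Ioc a b)) = volterraRight b (fun s η => (K η s)ᵀ) f η ⬝ᵥ g η := by
  have hind : ∀ s, {p : ℝ × ℝ | p.2 ≤ p.1}.indicator (fun p => f p.1 ⬝ᵥ K p.1 p.2 *ᵥ g p.2)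
      (s, η) = (Ici η).indicator (fun s => g η ⬝ᵥ (K s η)ᵀ *ᵥ f s) s := fun s => by
    simp only [indicator_apply, mem_ofPred_eq, mem_Ici, Matrix.mulVec_transpose]
    rw [dotProduct_mulVec, dotProduct_comm]
  simp only [hind, integral_indicator_Ici_restrict_Ioc hη]
  rw [dotProduct_comm]
  exact (dotProduct_intervalIntegral _ fun i =>
    IntegrableOn.intervalIntegrable_of_le (hslice.eval i) hη.1.le hη.2 le_rfl).symm

theorem integrableOn_dotProduct_volterraLeft {K : ℝ → ℝ → Matrix (Fin m) (Fin n) ℝ}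
    (hK : ∀ i j, MemLp (fun p : ℝ × ℝ => K p.1 p.2 i j) ∞
      ((volume.restrict (Ioc a b)).prod (volume.restrict (Ioc a b))))
    {f : ℝ → Fin m → ℝ} {g : ℝ → Fin n → ℝ} (hf : IntegrableOn f (Ioc a b))
    (hg : IntegrableOn g (Ioc a b)) :
    IntegrableOn (fun s => f s ⬝ᵥ volterraLeft a K g s) (Ioc a b) := by
  have hslices := (Integrable.mulVec hK (hg.comp_snd (volume.restrict (Ioc a b)))).prod_right_ae
  refine (Integrable.indicator_dotProduct_mulVec_prod hK hf hg
    (measurableSet_le measurable_snd measurable_fst)).integral_prod_left.congr ?_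
  filter_upwards [ae_restrict_mem measurableSet_Ioc, hslices] with s hs hsl
  exact integral_indicator_lowerTriangle_slice_left hs hsl

theorem integrableOn_dotProduct_volterraRight {K : ℝ → ℝ → Matrix (Fin m) (Fin n) ℝ}
    (hK : ∀ i j, MemLp (fun p : ℝ × ℝ => K p.1 p.2 i j) ∞
      ((volume.restrict (Ioc a b)).prod (volume.restrict (Ioc a b))))
    {f : ℝ → Fin m → ℝ} {g : ℝ → Fin n → ℝ} (hf : IntegrableOn f (Ioc a b))
    (hg : IntegrableOn g (Ioc a b)) :
    IntegrableOn (fun s => f s ⬝ᵥ volterraRight b K g s) (Ioc a b) := by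
  have hslices := (Integrable.mulVec hK (hg.comp_snd (volume.restrict (Ioc a b)))).prod_right_ae
  refine (Integrable.indicator_dotProduct_mulVec_prod hK hf hg
    (measurableSet_le measurable_fst measurable_snd)).integral_prod_left.congr ?_
  filter_upwards [ae_restrict_mem measurableSet_Ioc, hslices] with s hs hsl
  exact integral_indicator_upperTriangle_slice_left hs hsl

theorem integrableOn_volterraLeft {K : ℝ → ℝ → Matrix (Fin m) (Fin n) ℝ}
    (hK : ∀ i j, MemLp (fun p : ℝ × ℝ => K p.1 p.2 i j) ∞
      ((volume.restrict (Ioc a b)).prod (volume.restrict (Ioc a b))))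
    {g : ℝ → Fin n → ℝ} (hg : IntegrableOn g (Ioc a b)) :
    IntegrableOn (volterraLeft a K g) (Ioc a b) := by
  refine integrable_pi_iff.2 fun i => ?_
  have hi := integrableOn_dotProduct_volterraLeft hK
    (integrableOn_const measure_Ioc_lt_top.ne (C := Pi.single i (1 : ℝ))) hg
  simp only [single_dotProduct, one_mul] at hi
  exact hi

theorem integrableOn_volterraRight {K : ℝ → ℝ → Matrix (Fin m) (Fin n) ℝ}
    (hK : ∀ i j, MemLp (fun p : ℝ × ℝ => K p.1 p.2 i j) ∞
      ((volume.restrict (Ioc a b)).prod (volume.restrict (Ioc a b))))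
    {g : ℝ → Fin n → ℝ} (hg : IntegrableOn g (Ioc a b)) :
    IntegrableOn (volterraRight b K g) (Ioc a b) := by
  refine integrable_pi_iff.2 fun i => ?_
  have hi := integrableOn_dotProduct_volterraRight hK
    (integrableOn_const measure_Ioc_lt_top.ne (C := Pi.single i (1 : ℝ))) hg
  simp only [single_dotProduct, one_mul] at hi
  exact hi

theorem integral_dotProduct_volterraLeft (hab : a ≤ b) {K : ℝ → ℝ → Matrix (Fin m) (Fin n) ℝ}
    (hK : ∀ i j, MemLp (fun p : ℝ × ℝ => K p.1 p.2 i j) ∞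
      ((volume.restrict (Ioc a b)).prod (volume.restrict (Ioc a b))))
    {f : ℝ → Fin m → ℝ} {g : ℝ → Fin n → ℝ} (hf : IntegrableOn f (Ioc a b))
    (hg : IntegrableOn g (Ioc a b)) :
    ∫ s in a..b, f s ⬝ᵥ volterraLeft a K g s
      = ∫ s in a..b, volterraRight b (fun s η => (K η s)ᵀ) f s ⬝ᵥ g s := by
  set μ := volume.restrict (Ioc a b)
  have hΦ := Integrable.indicator_dotProduct_mulVec_prod hK hf hg
    (measurableSet_le measurable_snd measurable_fst)
  have hleft := (Integrable.mulVec hK (hg.comp_snd μ)).prod_right_ae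
  have hright := (Integrable.mulVec (fun i j => hK j i) (hf.comp_fst μ)).prod_left_ae
  rw [intervalIntegral.integral_of_le hab, intervalIntegral.integral_of_le hab]
  calc ∫ s, f s ⬝ᵥ volterraLeft a K g s ∂μ
      = ∫ s, ∫ η, {p : ℝ × ℝ | p.2 ≤ p.1}.indicator
          (fun p => f p.1 ⬝ᵥ K p.1 p.2 *ᵥ g p.2) (s, η) ∂μ ∂μ := by
        refine integral_congr_ae ?_
        filter_upwards [ae_restrict_mem measurableSet_Ioc, hleft] with s hs hsl
        exact (integral_indicator_lowerTriangle_slice_left hs hsl).symm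
    _ = ∫ η, ∫ s, {p : ℝ × ℝ | p.2 ≤ p.1}.indicator
          (fun p => f p.1 ⬝ᵥ K p.1 p.2 *ᵥ g p.2) (s, η) ∂μ ∂μ := integral_integral_swap hΦ
    _ = ∫ η, volterraRight b (fun s η => (K η s)ᵀ) f η ⬝ᵥ g η ∂μ := by
        refine integral_congr_ae ?_
        filter_upwards [ae_restrict_mem measurableSet_Ioc, hright] with η hη hsl
        exact integral_indicator_lowerTriangle_slice_right hη hsl

theorem integral_dotProduct_volterraLeft_comm (hab : a ≤ b)
    {K : ℝ → ℝ → Matrix (Fin m) (Fin n) ℝ} {K' : ℝ → ℝ → Matrix (Fin n) (Fin m) ℝ}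
    (hK : ∀ i j, MemLp (fun p : ℝ × ℝ => K p.1 p.2 i j) ∞
      ((volume.restrict (Ioc a b)).prod (volume.restrict (Ioc a b))))
    (hK' : ∀ s ∈ Icc a b, ∀ η ∈ Icc a b, K' s η = (K η s)ᵀ)
    {f : ℝ → Fin m → ℝ} {g : ℝ → Fin n → ℝ} (hf : IntegrableOn f (Ioc a b))
    (hg : IntegrableOn g (Ioc a b)) :
    ∫ s in a..b, f s ⬝ᵥ volterraLeft a K g s = ∫ s in a..b, g s ⬝ᵥ volterraRight b K' f s := by
  rw [integral_dotProduct_volterraLeft hab hK hf hg]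
  refine intervalIntegral.integral_congr fun s hs => ?_
  rw [uIcc_of_le hab] at hs
  rw [dotProduct_comm]
  congr 1
  funext i
  refine intervalIntegral.integral_congr fun η hη => ?_
  rw [uIcc_of_le hs.2] at hη
  simp only [hK' s hs η ⟨hs.1.trans hη.1, hη.2⟩]

end Volterra

section Pop

variable {a b : ℝ} {m n : ℕ}

theorem Pop_snd (P : Matrix (Fin m) (Fin m) ℝ) (Q1 : ℝ → Matrix (Fin m) (Fin n) ℝ)
    (Q2 : ℝ → Matrix (Fin n) (Fin m) ℝ) (S : ℝ → Matrix (Fin n) (Fin n) ℝ)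
    (R1 R2 : ℝ → ℝ → Matrix (Fin n) (Fin n) ℝ) (u : (Fin m → ℝ) × (ℝ → Fin n → ℝ)) (s : ℝ) :
    (Pop a b P Q1 Q2 S R1 R2 u).2 s
      = Q2 s *ᵥ u.1 + S s *ᵥ u.2 s + volterraLeft a R1 u.2 s + volterraRight b R2 u.2 s :=
  rfl

theorem innerX_comm (u v : (Fin m → ℝ) × (ℝ → Fin n → ℝ)) :
    innerX a b u v = innerX a b v u := by
  simp only [innerX, dotProduct_comm]

theorem innerX_congr_left {u u' v : (Fin m → ℝ) × (ℝ → Fin n → ℝ)} (h1 : u.1 = u'.1)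
    (h2 : EqOn u.2 u'.2 (uIcc a b)) : innerX a b u v = innerX a b u' v := by
  simp only [innerX, h1]
  congr 1
  exact intervalIntegral.integral_congr fun s hs => by simp only [h2 hs]

theorem innerX_Pop (hab : a ≤ b) {P : Matrix (Fin m) (Fin m) ℝ}
    {Q1 : ℝ → Matrix (Fin m) (Fin n) ℝ} {Q2 : ℝ → Matrix (Fin n) (Fin m) ℝ}
    {S : ℝ → Matrix (Fin n) (Fin n) ℝ} {R1 R2 : ℝ → ℝ → Matrix (Fin n) (Fin n) ℝ}
    (u v : (Fin m → ℝ) × (ℝ → Fin n → ℝ))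
    (hQ1 : IntegrableOn (fun s => Q1 s *ᵥ v.2 s) (Ioc a b))
    (hQ2 : IntegrableOn (fun s => u.2 s ⬝ᵥ Q2 s *ᵥ v.1) (Ioc a b))
    (hS : IntegrableOn (fun s => u.2 s ⬝ᵥ S s *ᵥ v.2 s) (Ioc a b))
    (hR1 : IntegrableOn (fun s => u.2 s ⬝ᵥ volterraLeft a R1 v.2 s) (Ioc a b))
    (hR2 : IntegrableOn (fun s => u.2 s ⬝ᵥ volterraRight b R2 v.2 s) (Ioc a b)) :
    innerX a b u (Pop a b P Q1 Q2 S R1 R2 v)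
      = u.1 ⬝ᵥ P *ᵥ v.1 + (∫ s in a..b, u.1 ⬝ᵥ Q1 s *ᵥ v.2 s)
        + ((∫ s in a..b, u.2 s ⬝ᵥ Q2 s *ᵥ v.1) + (∫ s in a..b, u.2 s ⬝ᵥ S s *ᵥ v.2 s)
          + (∫ s in a..b, u.2 s ⬝ᵥ volterraLeft a R1 v.2 s)
          + ∫ s in a..b, u.2 s ⬝ᵥ volterraRight b R2 v.2 s) := by
  have hii : ∀ {h : ℝ → ℝ}, IntegrableOn h (Ioc a b) → IntervalIntegrable h volume a b :=
    fun hh => (intervalIntegrable_iff_integrableOn_Ioc_of_le hab).2 hh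
  simp only [innerX, Pop, dotProduct_add]
  rw [dotProduct_intervalIntegral _ fun i => hii (hQ1.eval i)]
  change _ + ∫ s in a..b, u.2 s ⬝ᵥ Q2 s *ᵥ v.1 + u.2 s ⬝ᵥ S s *ᵥ v.2 s
      + u.2 s ⬝ᵥ volterraLeft a R1 v.2 s + u.2 s ⬝ᵥ volterraRight b R2 v.2 s = _
  rw [intervalIntegral.integral_add ?_ (hii hR2), intervalIntegral.integral_add ?_ (hii hR1),
    intervalIntegral.integral_add (hii hQ2) (hii hS)]
  · exact (hii hQ2).add (hii hS)
  · exact ((hii hQ2).add (hii hS)).add (hii hR1)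

theorem integrableOn_Pop_snd {P : Matrix (Fin m) (Fin m) ℝ} {Q1 : ℝ → Matrix (Fin m) (Fin n) ℝ}
    {Q2 : ℝ → Matrix (Fin n) (Fin m) ℝ} {S : ℝ → Matrix (Fin n) (Fin n) ℝ}
    {R1 R2 : ℝ → ℝ → Matrix (Fin n) (Fin n) ℝ}
    (hQ2 : ∀ i j, MemLp (fun s => Q2 s i j) ∞ (volume.restrict (Ioc a b)))
    (hS : ∀ i j, MemLp (fun s => S s i j) ∞ (volume.restrict (Ioc a b)))
    (hR1 : ∀ i j, MemLp (fun p : ℝ × ℝ => R1 p.1 p.2 i j) ∞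
      ((volume.restrict (Ioc a b)).prod (volume.restrict (Ioc a b))))
    (hR2 : ∀ i j, MemLp (fun p : ℝ × ℝ => R2 p.1 p.2 i j) ∞
      ((volume.restrict (Ioc a b)).prod (volume.restrict (Ioc a b))))
    {u : (Fin m → ℝ) × (ℝ → Fin n → ℝ)} (hu : IntegrableOn u.2 (Ioc a b)) :
    IntegrableOn (Pop a b P Q1 Q2 S R1 R2 u).2 (Ioc a b) :=
  (((Integrable.mulVec hQ2 (integrableOn_const measure_Ioc_lt_top.ne)).add
    (Integrable.mulVec hS hu)).add (integrableOn_volterraLeft hR1 hu)).add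
    (integrableOn_volterraRight hR2 hu)

theorem innerX_Pop_comm_of_isSymm (hab : a ≤ b) {P : Matrix (Fin m) (Fin m) ℝ} (hP : P.IsSymm)
    {Q : ℝ → Matrix (Fin m) (Fin n) ℝ} {S : ℝ → Matrix (Fin n) (Fin n) ℝ}
    {R1 R2 : ℝ → ℝ → Matrix (Fin n) (Fin n) ℝ}
    (hQ : ∀ i j, MemLp (fun s => Q s i j) ∞ (volume.restrict (Ioc a b)))
    (hS : ∀ i j, MemLp (fun s => S s i j) ∞ (volume.restrict (Ioc a b)))
    (hSsymm : ∀ s ∈ Icc a b, (S s).IsSymm)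
    (hR1 : ∀ i j, MemLp (fun p : ℝ × ℝ => R1 p.1 p.2 i j) ∞
      ((volume.restrict (Ioc a b)).prod (volume.restrict (Ioc a b))))
    (hR2 : ∀ i j, MemLp (fun p : ℝ × ℝ => R2 p.1 p.2 i j) ∞
      ((volume.restrict (Ioc a b)).prod (volume.restrict (Ioc a b))))
    (hR : ∀ s ∈ Icc a b, ∀ η ∈ Icc a b, R2 s η = (R1 η s)ᵀ)
    {u v : (Fin m → ℝ) × (ℝ → Fin n → ℝ)} (hu : MemLp u.2 ∞ (volume.restrict (Ioc a b)))
    (hv : IntegrableOn v.2 (Ioc a b)) :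
    innerX a b v (Pop a b P Q (fun s => (Q s)ᵀ) S R1 R2 u)
      = innerX a b u (Pop a b P Q (fun s => (Q s)ᵀ) S R1 R2 v) := by
  have hu' : IntegrableOn u.2 (Ioc a b) := hu.integrable le_top
  have hQt : ∀ i j, MemLp (fun s => (Q s)ᵀ i j) ∞ (volume.restrict (Ioc a b)) :=
    fun i j => hQ j i
  have hSu : IntegrableOn (fun s => u.2 s ⬝ᵥ S s *ᵥ v.2 s) (Ioc a b) :=
    (Integrable.dotProduct_of_memLp_top (Integrable.mulVec hS hv) hu).congr
      (ae_of_all _ fun s => dotProduct_comm _ _)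
  rw [innerX_Pop hab v u (Integrable.mulVec hQ hu')
      (Integrable.dotProduct_of_memLp_top hv (MemLp.mulVec hQt (memLp_top_const u.1)))
      (Integrable.dotProduct_of_memLp_top hv (MemLp.mulVec hS hu))
      (integrableOn_dotProduct_volterraLeft hR1 hv hu')
      (integrableOn_dotProduct_volterraRight hR2 hv hu'),
    innerX_Pop hab u v (Integrable.mulVec hQ hv)
      (Integrable.dotProduct_of_memLp_top hu' (MemLp.mulVec hQt (memLp_top_const v.1))) hSu
      (integrableOn_dotProduct_volterraLeft hR1 hu' hv)
      (integrableOn_dotProduct_volterraRight hR2 hu' hv)]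
  have hQ1' : ∫ s in a..b, v.1 ⬝ᵥ Q s *ᵥ u.2 s = ∫ s in a..b, u.2 s ⬝ᵥ (Q s)ᵀ *ᵥ v.1 :=
    intervalIntegral.integral_congr fun s _ => (dotProduct_transpose_mulVec _ _ _).symm
  have hQ2' : ∫ s in a..b, v.2 s ⬝ᵥ (Q s)ᵀ *ᵥ u.1 = ∫ s in a..b, u.1 ⬝ᵥ Q s *ᵥ v.2 s :=
    intervalIntegral.integral_congr fun s _ => dotProduct_transpose_mulVec _ _ _
  have hS' : ∫ s in a..b, v.2 s ⬝ᵥ S s *ᵥ u.2 s = ∫ s in a..b, u.2 s ⬝ᵥ S s *ᵥ v.2 s :=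
    intervalIntegral.integral_congr fun s hs =>
      (hSsymm s (uIcc_of_le hab ▸ hs)).dotProduct_mulVec_comm _ _
  rw [hP.dotProduct_mulVec_comm v.1, hQ1', hQ2', hS',
    integral_dotProduct_volterraLeft_comm hab hR1 hR hv hu',
    ← integral_dotProduct_volterraLeft_comm hab hR1 hR hu' hv]
  ring

theorem innerX_Pop_volterra_adjoint (hab : a ≤ b) (K1 K2 : ℝ → ℝ → Matrix (Fin n) (Fin n) ℝ)
    (hK1 : ∀ i j, MemLp (fun p : ℝ × ℝ => K1 p.1 p.2 i j) ∞
      ((volume.restrict (Ioc a b)).prod (volume.restrict (Ioc a b))))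
    (hK2 : ∀ i j, MemLp (fun p : ℝ × ℝ => K2 p.1 p.2 i j) ∞
      ((volume.restrict (Ioc a b)).prod (volume.restrict (Ioc a b))))
    {u v : (Fin m → ℝ) × (ℝ → Fin n → ℝ)} (hu : IntegrableOn u.2 (Ioc a b))
    (hv : IntegrableOn v.2 (Ioc a b)) :
    innerX a b u (Pop a b 1 (fun _ => 0) (fun _ => 0) (fun _ => 0)
        (fun s η => (K2 η s)ᵀ) (fun s η => (K1 η s)ᵀ) v)
      = innerX a b (Pop a b 1 (fun _ => 0) (fun _ => 0) (fun _ => 0) K1 K2 u) v := by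
  rw [innerX_comm _ v,
    innerX_Pop hab u v (by simp) (by simp) (by simp)
      (integrableOn_dotProduct_volterraLeft (memLp_top_transpose_swap hK2) hu hv)
      (integrableOn_dotProduct_volterraRight (memLp_top_transpose_swap hK1) hu hv),
    innerX_Pop hab v u (by simp) (by simp) (by simp)
      (integrableOn_dotProduct_volterraLeft hK1 hv hu)
      (integrableOn_dotProduct_volterraRight hK2 hv hu),
    integral_dotProduct_volterraLeft hab (memLp_top_transpose_swap hK2) hu hv,
    integral_dotProduct_volterraLeft hab hK1 hv hu]
  simp only [transpose_transpose, zero_mulVec, dotProduct_zero, one_mulVec,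
    intervalIntegral.integral_zero, add_zero, zero_add, dotProduct_comm u.1 v.1, add_comm]
  congr 2 <;> exact intervalIntegral.integral_congr fun s _ => dotProduct_comm _ _

end Pop

section BoundaryConditions

variable {a b : ℝ} {np : ℕ} {z zs zss : ℝ → Fin np → ℝ}

theorem colE_mulVec (η : ℝ) (v : Fin np → ℝ) :
    colE b np η *ᵥ v = fun p => ![0, (b - η) • v, 0, v] p.1 p.2 := by
  ext ⟨k, i⟩
  fin_cases k <;>
  · simp only [Matrix.mulVec, dotProduct, colE, Matrix.of_apply, Fin.zero_eta, Fin.mk_one,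
      Fin.reduceFinMk, Matrix.cons_val_zero, Matrix.cons_val_one, Matrix.cons_val_two,
      Matrix.cons_val_three, Matrix.head_cons, Matrix.tail_cons, Matrix.zero_apply, zero_mul,
      Finset.sum_const_zero, Pi.zero_apply, Matrix.smul_apply, Matrix.one_apply, smul_eq_mul, Pi.smul_apply, mul_ite, mul_one,
      mul_zero, ite_mul, one_mul, Finset.sum_ite_eq, Finset.mem_univ, if_true]

theorem Bdm_mulVec (w : Fin 2 × Fin np → ℝ) :
    Bdm a b np *ᵥ w = fun p =>
      ![fun i => w (0, i), fun i => w (0, i) + (b - a) * w (1, i),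
        fun i => w (1, i), fun i => w (1, i)] p.1 p.2 := by
  ext ⟨k, i⟩
  fin_cases k <;>
  · simp only [Matrix.mulVec, dotProduct, Bdm, Matrix.of_apply, Fintype.sum_prod_type,
      Fin.sum_univ_two, Fin.zero_eta, Fin.mk_one, Fin.reduceFinMk, Matrix.cons_val_zero,
      Matrix.cons_val_one, Matrix.cons_val_two, Matrix.cons_val_three, Matrix.head_cons,
      Matrix.tail_cons, Matrix.zero_apply, zero_mul, Finset.sum_const_zero, Matrix.smul_apply, Matrix.one_apply, smul_eq_mul,
      mul_ite, mul_one, mul_zero, ite_mul, one_mul, zero_mul, Finset.sum_ite_eq,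
      Finset.mem_univ, if_true, add_zero, zero_add]

theorem rowIA_mulVec_apply (s : ℝ) (w : Fin 2 × Fin np → ℝ) (i : Fin np) :
    (rowIA a np s *ᵥ w) i = w (0, i) + (s - a) * w (1, i) := by
  simp only [Matrix.mulVec, dotProduct, rowIA, Matrix.of_apply, Fintype.sum_prod_type,
    Fin.sum_univ_two, Matrix.cons_val_zero, Matrix.cons_val_one, Matrix.smul_apply,
    Matrix.one_apply, smul_eq_mul, mul_ite, mul_one, mul_zero, ite_mul, one_mul, zero_mul,
    Finset.sum_ite_eq, Finset.mem_univ, if_true]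

theorem zbv_eq_Bdm_mulVec_add_integral (hab : a ≤ b)
    (hz : ∀ s ∈ Icc a b, HasDerivWithinAt z (zs s) (Icc a b) s)
    (hzs : ∀ s ∈ Icc a b, HasDerivWithinAt zs (zss s) (Icc a b) s)
    (hzss : IntegrableOn zss (Ioc a b)) :
    zbv a b z zs = Bdm a b np *ᵥ (fun q => ![z a, zs a] q.1 q.2)
      + fun p => ∫ η in a..b, (colE b np η *ᵥ zss η) p := by
  ext ⟨k, i⟩
  have hb : b ∈ Icc a b := ⟨hab, le_rfl⟩
  have hftc := integral_eq_sub_of_hasDerivWithinAt_Icc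
    (fun t ht => hasDerivWithinAt_pi.1 (hzs t ht) i) (hzss.eval i) hb
  have htaylor := integral_sub_mul_eq_taylor_remainder
    (fun t ht => hasDerivWithinAt_pi.1 (hz t ht) i)
    (fun t ht => hasDerivWithinAt_pi.1 (hzs t ht) i) (hzss.eval i) hb
  simp only [colE_mulVec, Bdm_mulVec, Pi.add_apply]
  fin_cases k <;>
  simp only [zbv, Fin.zero_eta, Fin.mk_one, Fin.reduceFinMk, Fin.isValue, cons_val',
    cons_val_fin_one, cons_val, cons_val_zero, cons_val_one, Pi.zero_apply, Pi.smul_apply,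
    smul_eq_mul, intervalIntegral.integral_zero, add_zero] <;>
  linarith

theorem integral_Bfm_mulVec (hab : a ≤ b) {Bc : Matrix (Fin 2 × Fin np) (Fin 4 × Fin np) ℝ}
    (hdet : IsUnit (Bc * Bdm a b np).det)
    (hz : ∀ s ∈ Icc a b, HasDerivWithinAt z (zs s) (Icc a b) s)
    (hzs : ∀ s ∈ Icc a b, HasDerivWithinAt zs (zss s) (Icc a b) s)
    (hzss : IntegrableOn zss (Ioc a b)) (hbc : Bc *ᵥ zbv a b z zs = 0) :
    (fun q => ∫ η in a..b, (Bfm a b Bc η *ᵥ zss η) q) = -fun q => ![z a, zs a] q.1 q.2 := by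
  set w0 : Fin 2 × Fin np → ℝ := fun q => ![z a, zs a] q.1 q.2
  set IE : Fin 4 × Fin np → ℝ := fun p => ∫ η in a..b, (colE b np η *ᵥ zss η) p
  have hIE : ∀ p, IntervalIntegrable (fun η => (colE b np η *ᵥ zss η) p) volume a b := fun p =>
    (intervalIntegrable_iff_integrableOn_Ioc_of_le hab).2 <|
      (Integrable.mulVec (Continuous.memLp_top_apply (M := colE b np)
        (by unfold colE; fun_prop)) hzss).eval p
  have hBfm : (fun q => ∫ η in a..b, (Bfm a b Bc η *ᵥ zss η) q)
      = ((Bc * Bdm a b np)⁻¹ * Bc) *ᵥ IE := by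
    rw [mulVec_intervalIntegral _ hIE]
    simp only [Bfm, mulVec_mulVec]
  have hboundary : (Bc * Bdm a b np) *ᵥ w0 = -(Bc *ᵥ IE) := by
    rw [zbv_eq_Bdm_mulVec_add_integral hab hz hzs hzss, mulVec_add, mulVec_mulVec] at hbc
    exact eq_neg_of_add_eq_zero_left hbc
  rw [hBfm, ← mulVec_mulVec, ← neg_eq_iff_eq_neg.2 hboundary, mulVec_neg, mulVec_mulVec,
    nonsing_inv_mul _ hdet, one_mulVec]

theorem volterraLeft_G1m_add_volterraRight_G2m (hab : a ≤ b)
    {Bc : Matrix (Fin 2 × Fin np) (Fin 4 × Fin np) ℝ} (hdet : IsUnit (Bc * Bdm a b np).det)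
    (hz : ∀ s ∈ Icc a b, HasDerivWithinAt z (zs s) (Icc a b) s)
    (hzs : ∀ s ∈ Icc a b, HasDerivWithinAt zs (zss s) (Icc a b) s)
    (hzss : IntegrableOn zss (Ioc a b)) (hbc : Bc *ᵥ zbv a b z zs = 0) {s : ℝ}
    (hs : s ∈ Icc a b) :
    volterraLeft a (G1m a b Bc) zss s + volterraRight b (G2m a b Bc) zss s = z s := by
  ext i
  have hBam : IntegrableOn (fun η => Bam a b Bc s η *ᵥ zss η) (Ioc a b) :=
    Integrable.mulVec (Continuous.memLp_top_apply (M := Bam a b Bc s)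
      (by unfold Bam Bfm colE; fun_prop)) hzss
  have hBfm : ∀ q, IntervalIntegrable (fun η => (Bfm a b Bc η *ᵥ zss η) q) volume a b :=
    fun q => (intervalIntegrable_iff_integrableOn_Ioc_of_le hab).2 <|
      (Integrable.mulVec (Continuous.memLp_top_apply (M := Bfm a b Bc)
        (by unfold Bfm colE; fun_prop)) hzss).eval q
  have hfull : ∫ η in a..b, (Bam a b Bc s η *ᵥ zss η) i = z a i + (s - a) * zs a i := by
    have h := congrFun
      (congrArg (rowIA a np s *ᵥ ·) (integral_Bfm_mulVec hab hdet hz hzs hzss hbc)) i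
    rw [mulVec_intervalIntegral _ hBfm, mulVec_neg, Pi.neg_apply, rowIA_mulVec_apply] at h
    simp only [Bam, neg_mulVec, ← mulVec_mulVec, Pi.neg_apply, intervalIntegral.integral_neg, h]
    simp
  have hG1 : ∀ η, (G1m a b Bc s η *ᵥ zss η) i
      = (Bam a b Bc s η *ᵥ zss η) i + (s - η) * zss η i := fun η => by
    simp only [G1m, add_mulVec, smul_mulVec, one_mulVec, Pi.add_apply, Pi.smul_apply, smul_eq_mul]
  have hBamL := IntegrableOn.intervalIntegrable_of_le (hBam.eval i) le_rfl hs.1 hs.2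
  have hBamR := IntegrableOn.intervalIntegrable_of_le (hBam.eval i) hs.1 hs.2 le_rfl
  have htaylor := integral_sub_mul_eq_taylor_remainder
    (fun t ht => hasDerivWithinAt_pi.1 (hz t ht) i)
    (fun t ht => hasDerivWithinAt_pi.1 (hzs t ht) i) (hzss.eval i) hs
  have hadj := intervalIntegral.integral_add_adjacent_intervals hBamL hBamR
  simp only [Pi.add_apply, volterraLeft, volterraRight, hG1, G2m]
  rw [intervalIntegral.integral_add hBamL (IntegrableOn.intervalIntegrable_of_le
    (IntegrableOn.const_sub_mul (hzss.eval i) s) le_rfl hs.1 hs.2)]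
  linarith

end BoundaryConditions

theorem integrableOn_PdynApply_snd {a b : ℝ} {n0 np m0 p0 mp pp : ℕ}
    (A : Matrix (Fin n0) (Fin n0) ℝ) (B : Matrix (Fin n0) (Fin m0) ℝ)
    (C : Matrix (Fin p0) (Fin n0) ℝ)
    (L1 : Matrix (Fin m0) (Fin p0) ℝ) (L2 : Matrix (Fin m0) (Fin pp) ℝ)
    (L3 : Matrix (Fin mp) (Fin p0) ℝ) (L4 : Matrix (Fin mp) (Fin pp) ℝ)
    {A0 A1 A2 : ℝ → Matrix (Fin np) (Fin np) ℝ} {B1 : ℝ → Matrix (Fin np) (Fin mp) ℝ}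
    {Ca Cb : ℝ → Matrix (Fin pp) (Fin np) ℝ} (C1 : Matrix (Fin pp) (Fin 4 × Fin np) ℝ)
    (Bc : Matrix (Fin 2 × Fin np) (Fin 4 × Fin np) ℝ)
    (hA0 : BddMeas a b A0) (hA1 : BddMeas a b A1) (hA2 : BddMeas a b A2)
    (hB1 : BddMeas a b B1) (hCa : BddMeas a b Ca) (hCb : BddMeas a b Cb)
    {u : (Fin n0 → ℝ) × (ℝ → Fin np → ℝ)} (hu : IntegrableOn u.2 (Ioc a b)) :
    IntegrableOn (PdynApply a b A B C L1 L2 L3 L4 A0 A1 A2 B1 Ca Cb C1 Bc u).2 (Ioc a b) := by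
  have hconst : ∀ {k l : ℕ} (M : Matrix (Fin k) (Fin l) ℝ) i j,
      MemLp (fun _ : ℝ => M i j) ∞ (volume.restrict (Ioc a b)) :=
    fun M i j => memLp_top_const _
  have hB1L : ∀ {l : ℕ} (L : Matrix (Fin mp) (Fin l) ℝ) i j,
      MemLp (fun s => (B1 s * L) i j) ∞ (volume.restrict (Ioc a b)) :=
    fun L => memLp_top_mul_apply hB1.memLp_top (hconst L)
  have hC3 : ∀ i j, MemLp (fun s => C3m a b Bc C1 s i j) ∞ (volume.restrict (Ioc a b)) :=
    Continuous.memLp_top_apply (M := C3m a b Bc C1) (by unfold C3m Bfm colE; fun_prop)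
  have hzero : ∀ i j, MemLp (fun p : ℝ × ℝ => (0 : Matrix (Fin np) (Fin np) ℝ) i j) ∞
      ((volume.restrict (Ioc a b)).prod (volume.restrict (Ioc a b))) :=
    fun i j => memLp_top_const _
  have hPopG : ∀ {K1 K2 : ℝ → ℝ → Matrix (Fin np) (Fin np) ℝ},
      Continuous (fun p : ℝ × ℝ => K1 p.1 p.2) → Continuous (fun p : ℝ × ℝ => K2 p.1 p.2) →
      IntegrableOn (Pop a b 1 (fun _ => 0) (fun _ => 0) (fun _ => 0) K1 K2 u).2 (Ioc a b) :=
    fun hK1 hK2 => integrableOn_Pop_snd (fun i j => memLp_top_const _)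
      (fun i j => memLp_top_const _) (Continuous.memLp_top_apply_prod hK1)
      (Continuous.memLp_top_apply_prod hK2) hu
  refine ((integrableOn_Pop_snd (memLp_top_mul_apply (hB1L L3) (hconst C))
      (fun i j => (hA0.memLp_top i j).add (memLp_top_mul_apply (hB1L L4) hCa.memLp_top i j))
      hzero hzero (hPopG ?_ ?_)).add
    (integrableOn_Pop_snd (fun i j => memLp_top_const _)
      (fun i j => (hA1.memLp_top i j).add (memLp_top_mul_apply (hB1L L4) hCb.memLp_top i j))
      hzero hzero (hPopG ?_ ?_))).add
    (integrableOn_Pop_snd (fun i j => memLp_top_const _)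
      (fun i j => (hA2.memLp_top i j).add (memLp_top_mul_apply (hB1L L4) hC3 i j))
      hzero hzero hu)
  all_goals simp only [G1m, G2m, G3m, G4m, Bam, Bbm, Bfm, rowIA, rowZI, colE]; fun_prop

/-- **derivative of the Lyapunov function.**  With a self-adjoint
`𝒫 = 𝒫_{P,Q,Qᵀ,S,R₁,R₂}` and `𝒦 = 𝒫_{I,0,0,0,G₁,G₂}* ∘ 𝒫 ∘ 𝒫_dyn`, for every `x` and
every `z ∈ W^{2,2}` with `B_c z_b = 0` one has
`⟨(x,z), 𝒫 𝒫_dyn(x,z_ss)⟩_X + ⟨𝒫_dyn(x,z_ss), 𝒫 (x,z)⟩_X = 2 ⟨(x,z_ss), 𝒦(x,z_ss)⟩_X`. -/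
theorem lyapunov_derivative_representation {n0 np m0 p0 mp pp : ℕ}
    (a b : ℝ) (hab : a < b)
    (A : Matrix (Fin n0) (Fin n0) ℝ) (B : Matrix (Fin n0) (Fin m0) ℝ)
    (C : Matrix (Fin p0) (Fin n0) ℝ)
    (L1 : Matrix (Fin m0) (Fin p0) ℝ) (L2 : Matrix (Fin m0) (Fin pp) ℝ)
    (L3 : Matrix (Fin mp) (Fin p0) ℝ) (L4 : Matrix (Fin mp) (Fin pp) ℝ)
    (A0 A1 A2 : ℝ → Matrix (Fin np) (Fin np) ℝ)
    (B1 : ℝ → Matrix (Fin np) (Fin mp) ℝ)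
    (Ca Cb : ℝ → Matrix (Fin pp) (Fin np) ℝ)
    (C1 : Matrix (Fin pp) (Fin 4 × Fin np) ℝ)
    (hA0 : BddMeas a b A0) (hA1 : BddMeas a b A1) (hA2 : BddMeas a b A2)
    (hB1 : BddMeas a b B1) (hCa : BddMeas a b Ca) (hCb : BddMeas a b Cb)
    (Bc : Matrix (Fin 2 × Fin np) (Fin 4 × Fin np) ℝ)
    (hdet : IsUnit (Bc * Bdm a b np).det)
    (P : Matrix (Fin n0) (Fin n0) ℝ) (hP : P.IsSymm)
    (Q : ℝ → Matrix (Fin n0) (Fin np) ℝ)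
    (S : ℝ → Matrix (Fin np) (Fin np) ℝ)
    (R1 R2 : ℝ → ℝ → Matrix (Fin np) (Fin np) ℝ)
    (hQ : BddMeas a b Q) (hS : BddMeas a b S)
    (hR1 : BddMeas2 a b R1) (hR2 : BddMeas2 a b R2)
    (hSsymm : ∀ s ∈ Icc a b, (S s).IsSymm)
    (hR : ∀ s ∈ Icc a b, ∀ η ∈ Icc a b, R2 s η = (R1 η s)ᵀ)
    (x : Fin n0 → ℝ) (z zs zss : ℝ → Fin np → ℝ)
    (hz : ∀ s ∈ Icc a b, HasDerivWithinAt z (zs s) (Icc a b) s)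
    (hzs : ∀ s ∈ Icc a b, HasDerivWithinAt zs (zss s) (Icc a b) s)
    (hzss : MemLp zss 2 (volume.restrict (Icc a b)))
    (hbc : Bc.mulVec (zbv a b z zs) = 0) :
    innerX a b (x, z)
        (Pop a b P Q (fun s => (Q s)ᵀ) S R1 R2
          (PdynApply a b A B C L1 L2 L3 L4 A0 A1 A2 B1 Ca Cb C1 Bc (x, zss)))
      + innerX a b (PdynApply a b A B C L1 L2 L3 L4 A0 A1 A2 B1 Ca Cb C1 Bc (x, zss))
          (Pop a b P Q (fun s => (Q s)ᵀ) S R1 R2 (x, z))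
      = 2 * innerX a b (x, zss)
          (Kapply a b A B C L1 L2 L3 L4 A0 A1 A2 B1 Ca Cb C1 Bc P Q S R1 R2 (x, zss)) := by
  have hzss' : IntegrableOn zss (Ioc a b) :=
    (hzss.mono_measure (Measure.restrict_mono Ioc_subset_Icc_self le_rfl)).integrable one_le_two
  have hz' : MemLp z ∞ (volume.restrict (Ioc a b)) :=
    ContinuousOn.memLp_top_restrict_of_subset_isCompact (fun s hs => (hz s hs).continuousWithinAt)
      isCompact_Icc measurableSet_Ioc Ioc_subset_Icc_self
  have hrep : EqOn (Pop a b 1 (fun _ => 0) (fun _ => 0) (fun _ => 0) (G1m a b Bc) (G2m a b Bc)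
      (x, zss)).2 z (uIcc a b) := fun s hs => by
    rw [uIcc_of_le hab.le] at hs
    rw [Pop_snd, zero_mulVec, zero_mulVec, zero_add, zero_add]
    exact volterraLeft_G1m_add_volterraRight_G2m hab.le hdet hz hzs hzss' hbc hs
  rw [Kapply, PGadjApply]
  set PD := PdynApply a b A B C L1 L2 L3 L4 A0 A1 A2 B1 Ca Cb C1 Bc (x, zss)
  have hPD : IntegrableOn PD.2 (Ioc a b) :=
    integrableOn_PdynApply_snd A B C L1 L2 L3 L4 C1 Bc hA0 hA1 hA2 hB1 hCa hCb hzss'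
  rw [innerX_Pop_comm_of_isSymm hab.le hP hQ.memLp_top hS.memLp_top hSsymm hR1.memLp_top
      hR2.memLp_top hR (u := (x, z)) (v := PD) hz' hPD,
    innerX_Pop_volterra_adjoint hab.le (G1m a b Bc) (G2m a b Bc)
      (Continuous.memLp_top_apply_prod (by simp only [G1m, Bam, Bfm, rowIA, colE]; fun_prop))
      (Continuous.memLp_top_apply_prod (by simp only [G2m, Bam, Bfm, rowIA, colE]; fun_prop))
      hzss' (integrableOn_Pop_snd (Q2 := fun s => (Q s)ᵀ) (fun i j => hQ.memLp_top j i) hS.memLp_top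
        hR1.memLp_top hR2.memLp_top hPD),
    innerX_congr_left (u' := (x, z)) (by ext i; simp [Pop]) hrep]
  ring

end
end

section
/- Consider the coupled ODE-heat system on the interval [0,1]: ẋ(t) = −3x(t) + z(0,t), ż(s,t) = z_ss(s,t), with boundary conditions z_s(0,t) = 0 and z(1,t) = 0. Then this system is exponentially stable: there exist M ≥ 1 and δ > 0 such that every classical solution (x(t), z(·,t)) — with x : [0,∞) → ℝ continuously differentiable, z(·,t) ∈ W^{2,2}([0,1];ℝ) satisfying the boundary conditions for all t ≥ 0, and t ↦ (x(t), z(·,t)) differentiable into ℝ × L²(0,1) with the stated dynamics — satisfies (|x(t)|² + ‖z(·,t)‖_{L²(0,1)}²)^{1/2} ≤ M e^{−δt} (|x(0)|² + ‖z(·,0)‖_{L²(0,1)}²)^{1/2} for all t ≥ 0. -/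
open MeasureTheory Set
open scoped RealInnerProductSpace

/-!
The energy `E(t) = x(t)² + ‖z(·,t)‖²_{L²}` is a Lyapunov function. Along a solution
`E' = 2x(−3x + z(0)) + 2⟪z, z_ss⟫`, and integrating by parts with the boundary conditions
turns `⟪z, z_ss⟫` into `−‖z_s‖²`. Since `z(1) = 0`, Cauchy–Schwarz gives the Poincaré bounds
`z(s)² ≤ ‖z_s‖²` on `[0,1]`, so `z(0)² ≤ ‖z_s‖²` and `‖z‖² ≤ ‖z_s‖²`. Hence
`E' + E ≤ −5x² + 2x z(0) − z(0)² = −4x² − (x − z(0))² ≤ 0`, and Grönwall gives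
`E(t) ≤ e^{−t} E(0)`, i.e. exponential stability with `M = 1`, `δ = 1/2`.
-/

section L2

variable {α : Type*} [MeasurableSpace α] {μ : Measure α}

theorem MeasureTheory.MemLp.inner_toLp_toLp {f g : α → ℝ} (hf : MemLp f 2 μ) (hg : MemLp g 2 μ) :
    ⟪hf.toLp f, hg.toLp g⟫ = ∫ s, f s * g s ∂μ := by
  rw [L2.inner_def]
  refine integral_congr_ae ?_
  filter_upwards [hf.coeFn_toLp, hg.coeFn_toLp] with s hfs hgs
  rw [hfs, hgs, Real.inner_apply]

theorem MeasureTheory.MemLp.norm_toLp_sq {f : α → ℝ} (hf : MemLp f 2 μ) :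
    ‖hf.toLp f‖ ^ 2 = ∫ s, f s ^ 2 ∂μ := by
  rw [← real_inner_self_eq_norm_sq, hf.inner_toLp_toLp hf]
  simp only [sq]

theorem sq_integral_le_measureReal_univ_mul_integral_sq [IsFiniteMeasure μ] {f : α → ℝ}
    (hf : MemLp f 2 μ) : (∫ s, f s ∂μ) ^ 2 ≤ μ.real univ * ∫ s, f s ^ 2 ∂μ := by
  have h1 : MemLp (fun _ ↦ (1 : ℝ)) 2 μ := memLp_const 1
  have hcs := real_inner_mul_inner_self_le (hf.toLp f) (h1.toLp _)
  simp only [hf.inner_toLp_toLp, h1.inner_toLp_toLp, mul_one, integral_const, smul_eq_mul] at hcs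
  simpa only [sq, mul_comm (μ.real univ)] using hcs

end L2

theorem ContinuousOn.memLp_restrict_of_isCompact {X : Type*} [TopologicalSpace X]
    [MeasurableSpace X] [OpensMeasurableSpace X] {μ : Measure X} [IsFiniteMeasureOnCompacts μ]
    {s : Set X} {f : X → ℝ} (hf : ContinuousOn f s) (hs : IsCompact s) (h's : MeasurableSet s)
    (p : ENNReal) : MemLp f p (μ.restrict s) := by
  have : IsFiniteMeasure (μ.restrict s) := isFiniteMeasure_restrict.2 hs.measure_lt_top.ne
  obtain ⟨C, hC⟩ := hs.exists_bound_of_continuousOn hf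
  exact MemLp.of_bound (hf.aestronglyMeasurable_of_isCompact hs h's) C
    ((ae_restrict_iff' h's).2 (.of_forall hC))

section Interval

variable {a b : ℝ}

theorem intervalIntegral_eq_integral_restrict_Icc (hab : a ≤ b) (f : ℝ → ℝ) :
    ∫ s in a..b, f s = ∫ s, f s ∂volume.restrict (Icc a b) := by
  rw [intervalIntegral.integral_of_le hab, integral_Icc_eq_integral_Ioc]

theorem MeasureTheory.MemLp.inner_toLp_toLp_eq_intervalIntegral (hab : a ≤ b) {f g : ℝ → ℝ}
    (hf : MemLp f 2 (volume.restrict (Icc a b))) (hg : MemLp g 2 (volume.restrict (Icc a b))) :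
    ⟪hf.toLp f, hg.toLp g⟫ = ∫ s in a..b, f s * g s := by
  rw [hf.inner_toLp_toLp hg, intervalIntegral_eq_integral_restrict_Icc hab]

theorem MeasureTheory.MemLp.norm_toLp_sq_eq_intervalIntegral (hab : a ≤ b) {f : ℝ → ℝ}
    (hf : MemLp f 2 (volume.restrict (Icc a b))) :
    ‖hf.toLp f‖ ^ 2 = ∫ s in a..b, f s ^ 2 := by
  rw [hf.norm_toLp_sq, intervalIntegral_eq_integral_restrict_Icc hab]

theorem sq_intervalIntegral_le (hab : a ≤ b) {f : ℝ → ℝ}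
    (hf : MemLp f 2 (volume.restrict (Icc a b))) :
    (∫ s in a..b, f s) ^ 2 ≤ (b - a) * ∫ s in a..b, f s ^ 2 := by
  have h := sq_integral_le_measureReal_univ_mul_integral_sq hf
  rwa [measureReal_restrict_apply_univ, Real.volume_real_Icc_of_le hab,
    ← intervalIntegral_eq_integral_restrict_Icc hab,
    ← intervalIntegral_eq_integral_restrict_Icc hab] at h

variable {f f' f'' : ℝ → ℝ}

theorem sq_le_mul_integral_sq_deriv_of_right_eq_zero
    (hf : ∀ s ∈ Icc a b, HasDerivWithinAt f (f' s) (Icc a b) s)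
    (hf' : ContinuousOn f' (Icc a b)) (hfb : f b = 0) {s : ℝ} (hs : s ∈ Icc a b) :
    f s ^ 2 ≤ (b - a) * ∫ u in a..b, f' u ^ 2 := by
  have hsub : Icc s b ⊆ Icc a b := Icc_subset_Icc_left hs.1
  have hftc : ∫ u in s..b, f' u = f b - f s := by
    refine intervalIntegral.integral_eq_sub_of_hasDerivAt_of_le hs.2
      (fun u hu ↦ (hf u (hsub hu)).continuousWithinAt.mono hsub) (fun u hu ↦ ?_)
      ((hf'.mono (by rwa [uIcc_of_le hs.2])).intervalIntegrable)
    exact (hf u (hsub (Ioo_subset_Icc_self hu))).hasDerivAt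
      (Icc_mem_nhds (hs.1.trans_lt hu.1) hu.2)
  have hsq : IntervalIntegrable (fun u ↦ f' u ^ 2) volume a b :=
    ((hf'.pow 2).mono (by rw [uIcc_of_le (hs.1.trans hs.2)])).intervalIntegrable
  calc f s ^ 2 = (∫ u in s..b, f' u) ^ 2 := by rw [hftc, hfb, zero_sub, neg_sq]
    _ ≤ (b - s) * ∫ u in s..b, f' u ^ 2 :=
      sq_intervalIntegral_le hs.2 ((hf'.mono hsub).memLp_restrict_of_isCompact isCompact_Icc
        measurableSet_Icc 2)
    _ ≤ (b - a) * ∫ u in a..b, f' u ^ 2 := by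
      refine mul_le_mul (by linarith [hs.1]) ?_
        (intervalIntegral.integral_nonneg hs.2 fun u _ ↦ sq_nonneg _) (by linarith [hs.1, hs.2])
      exact intervalIntegral.integral_mono_interval hs.1 hs.2 le_rfl
        (.of_forall fun u ↦ sq_nonneg _) hsq

theorem integral_sq_le_mul_integral_sq_deriv_of_right_eq_zero (hab : a ≤ b)
    (hf : ∀ s ∈ Icc a b, HasDerivWithinAt f (f' s) (Icc a b) s)
    (hf' : ContinuousOn f' (Icc a b)) (hfb : f b = 0) :
    ∫ s in a..b, f s ^ 2 ≤ (b - a) ^ 2 * ∫ u in a..b, f' u ^ 2 := by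
  have hcont : ContinuousOn (fun s ↦ f s ^ 2) (uIcc a b) := by
    rw [uIcc_of_le hab]; exact (fun s hs ↦ (hf s hs).continuousWithinAt.pow 2)
  calc ∫ s in a..b, f s ^ 2 ≤ ∫ _ in a..b, (b - a) * ∫ u in a..b, f' u ^ 2 :=
        intervalIntegral.integral_mono_on hab hcont.intervalIntegrable intervalIntegrable_const
          fun s hs ↦ sq_le_mul_integral_sq_deriv_of_right_eq_zero hf hf' hfb hs
    _ = (b - a) ^ 2 * ∫ u in a..b, f' u ^ 2 := by
      rw [intervalIntegral.integral_const, smul_eq_mul]; ring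

theorem integral_deriv_deriv_mul_eq_neg_integral_sq (hab : a ≤ b)
    (hf : ∀ s ∈ Icc a b, HasDerivWithinAt f (f' s) (Icc a b) s)
    (hf' : ∀ s ∈ Icc a b, HasDerivWithinAt f' (f'' s) (Icc a b) s)
    (hf'' : IntervalIntegrable f'' volume a b) (ha : f' a = 0) (hb : f b = 0) :
    ∫ s in a..b, f'' s * f s = -∫ s in a..b, f' s ^ 2 := by
  rw [← uIcc_of_le hab] at hf hf'
  have hcont : ContinuousOn f (uIcc a b) := fun s hs ↦ (hf s hs).continuousWithinAt
  have hcont' : ContinuousOn f' (uIcc a b) := fun s hs ↦ (hf' s hs).continuousWithinAt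
  have hparts := intervalIntegral.integral_deriv_mul_eq_sub_of_hasDerivWithinAt hf' hf hf''
    hcont'.intervalIntegrable
  rw [ha, hb, mul_zero, zero_mul, sub_zero, intervalIntegral.integral_add
    (hf''.mul_continuousOn hcont) (hcont'.fun_mul hcont').intervalIntegrable] at hparts
  simp only [sq]
  linarith

end Interval

theorem le_mul_exp_of_hasDerivWithinAt_le_mul {f f' : ℝ → ℝ} {K a : ℝ}
    (hf : ∀ t ∈ Ici a, HasDerivWithinAt f (f' t) (Ici a) t)
    (bound : ∀ t ∈ Ici a, f' t ≤ K * f t) {t : ℝ} (ht : a ≤ t) :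
    f t ≤ f a * Real.exp (K * (t - a)) := by
  have h := le_gronwallBound_of_liminf_deriv_right_le (f := f) (f' := f') (ε := 0) (b := t)
    (fun s hs ↦ (hf s hs.1).continuousWithinAt.mono Icc_subset_Ici_self)
    (fun s hs _ hr ↦ ((hf s hs.1).mono (Ici_subset_Ici.2 hs.1)).liminf_right_slope_le hr)
    le_rfl (fun s hs ↦ by simpa using bound s hs.1) t (right_mem_Icc.2 ht)
  rwa [gronwallBound_ε0] at h

theorem heat_ode_energy_dissipation (x : ℝ) {z zs zss : ℝ → ℝ}
    (hz : ∀ s ∈ Icc (0 : ℝ) 1, HasDerivWithinAt z (zs s) (Icc 0 1) s)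
    (hzs : ∀ s ∈ Icc (0 : ℝ) 1, HasDerivWithinAt zs (zss s) (Icc 0 1) s)
    (hzss : IntervalIntegrable zss volume 0 1) (h0 : zs 0 = 0) (h1 : z 1 = 0) :
    2 * x * (-3 * x + z 0) + 2 * ∫ s in (0 : ℝ)..1, z s * zss s
      ≤ -(x ^ 2 + ∫ s in (0 : ℝ)..1, z s ^ 2) := by
  have hzs_cont : ContinuousOn zs (Icc 0 1) := fun s hs ↦ (hzs s hs).continuousWithinAt
  have hparts : ∫ s in (0 : ℝ)..1, z s * zss s = -∫ s in (0 : ℝ)..1, zs s ^ 2 := by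
    simp only [mul_comm (z _)]
    exact integral_deriv_deriv_mul_eq_neg_integral_sq zero_le_one hz hzs hzss h0 h1
  have hz0 := sq_le_mul_integral_sq_deriv_of_right_eq_zero hz hzs_cont h1
    (left_mem_Icc.2 zero_le_one)
  have hzL2 := integral_sq_le_mul_integral_sq_deriv_of_right_eq_zero zero_le_one hz hzs_cont h1
  rw [sub_zero, one_mul] at hz0
  rw [sub_zero, one_pow, one_mul] at hzL2
  nlinarith [sq_nonneg (x - z 0)]

/-- **ODE coupled with the heat equation.**  The coupled system on `[0,1]`
`ẋ(t) = −3x(t) + z(0,t)`, `ż = z_ss`, `z_s(0,t) = 0`, `z(1,t) = 0` is exponentially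
stable: there exist `M ≥ 1` and `δ > 0` such that every classical solution satisfies
`(|x(t)|² + ‖z(·,t)‖²_{L²})^{1/2} ≤ M e^{−δt} (|x(0)|² + ‖z(·,0)‖²_{L²})^{1/2}`. -/
theorem heat_ode_coupled_exponentially_stable :
    ∃ M δ : ℝ, 1 ≤ M ∧ 0 < δ ∧
      ∀ (x : ℝ → ℝ) (z zs zss : ℝ → ℝ → ℝ)
        -- the trajectory lies in `L²(0,1)`
        (hmem : ∀ t : ℝ, MemLp (z t) 2 (volume.restrict (Icc (0:ℝ) 1)))
        -- spatial regularity: `z(·,t) ∈ W^{2,2}([0,1];ℝ)`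
        (_hzd : ∀ t : ℝ, 0 ≤ t →
          ∀ s ∈ Icc (0:ℝ) 1, HasDerivWithinAt (z t) (zs t s) (Icc (0:ℝ) 1) s)
        (_hzsd : ∀ t : ℝ, 0 ≤ t →
          ∀ s ∈ Icc (0:ℝ) 1, HasDerivWithinAt (zs t) (zss t s) (Icc (0:ℝ) 1) s)
        (hss : ∀ (t : ℝ), 0 ≤ t → MemLp (zss t) 2 (volume.restrict (Icc (0:ℝ) 1)))
        -- boundary conditions `z_s(0,t) = 0`, `z(1,t) = 0`
        (_hb1 : ∀ t : ℝ, 0 ≤ t → zs t 0 = 0)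
        (_hb2 : ∀ t : ℝ, 0 ≤ t → z t 1 = 0)
        -- ODE dynamics: `x` is continuously differentiable with `ẋ(t) = −3x(t) + z(0,t)`
        (_hx : ∀ t : ℝ, 0 ≤ t →
          HasDerivWithinAt x (-3 * x t + z t 0) (Ici (0:ℝ)) t)
        (_hxC1 : ContinuousOn (fun t => -3 * x t + z t 0) (Ici (0:ℝ)))
        -- PDE dynamics: `t ↦ z(·,t)` is differentiable into `L²(0,1)` with `ż = z_ss`
        (_hzdyn : ∀ (t : ℝ) (ht : 0 ≤ t), HasDerivWithinAt
          (fun τ => MemLp.toLp (z τ) (hmem τ))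
          (MemLp.toLp (zss t) (hss t ht)) (Ici (0:ℝ)) t),
        ∀ t : ℝ, 0 ≤ t →
          Real.sqrt ((x t) ^ 2 + ∫ s in (0:ℝ)..1, (z t s) ^ 2)
            ≤ M * Real.exp (-δ * t)
              * Real.sqrt ((x 0) ^ 2 + ∫ s in (0:ℝ)..1, (z 0 s) ^ 2) := by
  refine ⟨1, 1 / 2, le_rfl, one_half_pos, ?_⟩
  intro x z zs zss hmem hzd hzsd hss hb1 hb2 hx _ hzdyn t ht
  set E : ℝ → ℝ := fun τ ↦ x τ ^ 2 + ‖(hmem τ).toLp (z τ)‖ ^ 2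
  have hE : ∀ τ, E τ = x τ ^ 2 + ∫ s in (0 : ℝ)..1, z τ s ^ 2 := fun τ ↦ by
    rw [← (hmem τ).norm_toLp_sq_eq_intervalIntegral zero_le_one]
  have hE_deriv : ∀ τ ∈ Ici (0 : ℝ), HasDerivWithinAt E
      (2 * x τ * (-3 * x τ + z τ 0) + 2 * ∫ s in (0 : ℝ)..1, z τ s * zss τ s) (Ici 0) τ :=
    fun τ hτ ↦ by
      refine (((hx τ hτ).fun_pow 2).fun_add (hzdyn τ hτ).norm_sq).congr_deriv ?_
      rw [(hmem τ).inner_toLp_toLp_eq_intervalIntegral zero_le_one]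
      norm_num
  have hE_le : ∀ τ ∈ Ici (0 : ℝ),
      2 * x τ * (-3 * x τ + z τ 0) + 2 * ∫ s in (0 : ℝ)..1, z τ s * zss τ s ≤ -1 * E τ :=
    fun τ hτ ↦ by
      rw [hE, neg_one_mul]
      exact heat_ode_energy_dissipation (x τ) (hzd τ hτ) (hzsd τ hτ)
        ((intervalIntegrable_iff_integrableOn_Icc_of_le zero_le_one).2
          ((hss τ hτ).integrable one_le_two)) (hb1 τ hτ) (hb2 τ hτ)
  have hdecay := le_mul_exp_of_hasDerivWithinAt_le_mul hE_deriv hE_le ht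
  rw [sub_zero] at hdecay
  rw [← hE, ← hE]
  calc √(E t) ≤ √(E 0 * Real.exp (-1 * t)) := Real.sqrt_le_sqrt hdecay
    _ = 1 * Real.exp (-(1 / 2) * t) * √(E 0) := by
      rw [Real.sqrt_mul' _ (Real.exp_nonneg _), ← Real.exp_half]; ring_nf
end
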